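/- Let p, q ∈ [1,∞] with 1/p + 1/q = 1, let F ⊆ ℝⁿ be a convex set, let η > 0, and let R : ℝⁿ → ℝ be differentiable and β-strongly convex with respect to the ℓ_p norm on F for some β > 0. Let D_R(a,b) = R(a) − R(b) − ⟨∇R(b), a − b⟩ denote the Bregman divergence of R. Let x ∈ [0,1]ⁿ, let g ∈ F, and let g' ∈ F minimize u ↦ η⟨u, x⟩ + D_R(u, g) over F (one step of Online Mirror Descent). Then ‖g' − g‖_p ≤ ηn/β. -/

import Mathlib

open scoped BigOperators ENNReal

noncomputable section

/-- The bilinear pairing `⟨a, b⟩ = ∑ i, a i * b i` on `ℝⁿ`. -/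
def ip {n : ℕ} (a b : Fin n → ℝ) : ℝ := ∑ i, a i * b i

/-- The `ℓ_p` norm on `ℝⁿ`, for `p ∈ [1, ∞]` (`‖a‖_∞ = max_i |a i|`). -/
def lpNorm {n : ℕ} (p : ℝ≥0∞) (a : Fin n → ℝ) : ℝ :=
  if p = ⊤ then ⨆ i, |a i| else (∑ i, |a i| ^ p.toReal) ^ (1 / p.toReal)

/-- `R` is `β`-strongly convex with respect to the `ℓ_p` norm on the convex set `F`. -/
def StronglyConvexOnWrt {n : ℕ} (F : Set (Fin n → ℝ)) (β : ℝ) (p : ℝ≥0∞)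
    (R : (Fin n → ℝ) → ℝ) : Prop :=
  ∀ a ∈ F, ∀ b ∈ F, ∀ l : ℝ, 0 ≤ l → l ≤ 1 →
    R (l • a + (1 - l) • b) ≤
      l * R a + (1 - l) * R b - β / 2 * l * (1 - l) * (lpNorm p (a - b)) ^ 2

/-- The Bregman divergence `D_R(a,b) = R a - R b - ⟨∇R b, a - b⟩`. -/
def bregman {n : ℕ} (R : (Fin n → ℝ) → ℝ) (a b : Fin n → ℝ) : ℝ :=
  R a - R b - fderiv ℝ R b (a - b)


/-! The objective `Φ u = η ⟨u, x⟩ + D_R(u, g)` is `R` plus an affine function, hence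
`β`-strongly convex, so its constrained minimizer `g'` satisfies the quadratic growth bound
`Φ g' + β/2 ‖g' - g‖² ≤ Φ g`. Strong convexity also bounds the Bregman divergence from below,
`β/2 ‖g' - g‖² ≤ D_R(g', g)`, and `D_R(g, g) = 0`; together
`β ‖g' - g‖² ≤ η ⟨g - g', x⟩ ≤ η n ‖g' - g‖`, the last step because each coordinate is bounded
by the `ℓ_p` norm and `0 ≤ x ≤ 1`. -/

open Filter Topology Set

def omdObjective {n : ℕ} (η : ℝ) (R : (Fin n → ℝ) → ℝ) (x g u : Fin n → ℝ) : ℝ :=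
  η * ip u x + bregman R u g

lemma ip_eq_dotProduct {n : ℕ} (a b : Fin n → ℝ) : ip a b = a ⬝ᵥ b := rfl

@[simp]
lemma bregman_self {n : ℕ} (R : (Fin n → ℝ) → ℝ) (a : Fin n → ℝ) : bregman R a a = 0 := by
  simp [bregman]

lemma lpNorm_nonneg {n : ℕ} (p : ℝ≥0∞) (a : Fin n → ℝ) : 0 ≤ lpNorm p a := by
  unfold lpNorm
  split_ifs
  · exact Real.iSup_nonneg fun i => abs_nonneg _
  · exact Real.rpow_nonneg (Finset.sum_nonneg fun j _ => Real.rpow_nonneg (abs_nonneg _) _) _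

lemma abs_le_lpNorm {n : ℕ} {p : ℝ≥0∞} (hp : p ≠ 0) (a : Fin n → ℝ) (i : Fin n) :
    |a i| ≤ lpNorm p a := by
  unfold lpNorm
  split_ifs with htop
  · exact le_ciSup (f := fun j => |a j|) (Set.finite_range _).bddAbove i
  · have hpr : 0 < p.toReal := ENNReal.toReal_pos hp htop
    calc |a i| = (|a i| ^ p.toReal) ^ (1 / p.toReal) := by
          rw [one_div, Real.rpow_rpow_inv (abs_nonneg _) hpr.ne']
      _ ≤ (∑ j, |a j| ^ p.toReal) ^ (1 / p.toReal) := by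
          gcongr
          exact Finset.single_le_sum (f := fun j => |a j| ^ p.toReal)
            (fun j _ => by positivity) (Finset.mem_univ i)

lemma abs_ip_le_card_mul_lpNorm {n : ℕ} {p : ℝ≥0∞} (hp : p ≠ 0) (v x : Fin n → ℝ)
    (hx : ∀ i, |x i| ≤ 1) : |ip v x| ≤ n * lpNorm p v :=
  calc |ip v x| ≤ ∑ i, |v i * x i| := Finset.abs_sum_le_sum_abs _ _
    _ ≤ ∑ _i : Fin n, lpNorm p v := by
        gcongr with i
        rw [abs_mul]
        exact mul_le_of_le_one_right (abs_nonneg _) (hx i) |>.trans (abs_le_lpNorm hp v i)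
    _ = n * lpNorm p v := by simp

namespace StronglyConvexOnWrt

variable {n : ℕ} {F : Set (Fin n → ℝ)} {β : ℝ} {p : ℝ≥0∞} {R : (Fin n → ℝ) → ℝ}

lemma add_convexOn (hR : StronglyConvexOnWrt F β p R) {A : (Fin n → ℝ) → ℝ}
    (hA : ConvexOn ℝ F A) : StronglyConvexOnWrt F β p (R + A) := by
  intro a ha b hb l hl0 hl1
  have hRab := hR a ha b hb l hl0 hl1
  have hAab := hA.2 ha hb hl0 (sub_nonneg.2 hl1) (add_sub_cancel l 1)
  simp only [Pi.add_apply, smul_eq_mul] at hAab ⊢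
  linarith

lemma omdObjective (hR : StronglyConvexOnWrt F β p R) (hF : Convex ℝ F) (η : ℝ)
    (x g : Fin n → ℝ) : StronglyConvexOnWrt F β p (omdObjective η R x g) := by
  set L : (Fin n → ℝ) →ₗ[ℝ] ℝ := η • (dotProductBilin ℝ ℝ).flip x - (fderiv ℝ R g).toLinearMap
  have hA : ConvexOn ℝ F (fun u => L u + (fderiv ℝ R g g - R g)) :=
    (L.convexOn hF).add_const _
  convert hR.add_convexOn hA using 1
  funext u
  simp only [_root_.omdObjective, ip_eq_dotProduct, bregman, map_sub, LinearMap.sub_apply,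
    LinearMap.smul_apply, LinearMap.flip_apply, dotProductBilin_apply_apply, smul_eq_mul,
    ContinuousLinearMap.coe_coe, Pi.add_apply, L]
  ring

lemma add_sq_le_of_isMinOn (hR : StronglyConvexOnWrt F β p R) (hF : Convex ℝ F)
    {a b : Fin n → ℝ} (ha : a ∈ F) (hb : b ∈ F) (hmin : IsMinOn R F a) :
    R a + β / 2 * lpNorm p (a - b) ^ 2 ≤ R b := by
  have hbelow : ∀ l ∈ Ioo (0 : ℝ) 1, R a + β / 2 * l * lpNorm p (a - b) ^ 2 ≤ R b := by
    intro l ⟨hl0, hl1⟩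
    have hmin_l :=
      isMinOn_iff.1 hmin _ (hF ha hb hl0.le (sub_nonneg.2 hl1.le) (add_sub_cancel l 1))
    have hconv := hR a ha b hb l hl0.le hl1.le
    have hpos : 0 < 1 - l := sub_pos.2 hl1
    nlinarith
  have hlim : Tendsto (fun l : ℝ => R a + β / 2 * l * lpNorm p (a - b) ^ 2) (𝓝[<] 1)
      (𝓝 (R a + β / 2 * 1 * lpNorm p (a - b) ^ 2)) :=
    (Continuous.tendsto (by fun_prop) 1).mono_left nhdsWithin_le_nhds
  simpa using le_of_tendsto hlim (eventually_of_mem (Ioo_mem_nhdsLT one_pos) hbelow)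

lemma sq_le_bregman (hR : StronglyConvexOnWrt F β p R) {a b : Fin n → ℝ} (ha : a ∈ F)
    (hb : b ∈ F) (hRb : DifferentiableAt ℝ R b) :
    β / 2 * lpNorm p (a - b) ^ 2 ≤ bregman R a b := by
  have hslope : ∀ l ∈ Ioo (0 : ℝ) 1,
      l⁻¹ • (R (b + l • (a - b)) - R b) ≤ R a - R b - β / 2 * (1 - l) * lpNorm p (a - b) ^ 2 := by
    intro l ⟨hl0, hl1⟩
    have hconv := hR a ha b hb l hl0.le hl1.le
    have hline : l • a + (1 - l) • b = b + l • (a - b) := by module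
    rw [hline] at hconv
    rw [smul_eq_mul, inv_mul_le_iff₀ hl0]
    nlinarith
  have hlim : Tendsto (fun l : ℝ => R a - R b - β / 2 * (1 - l) * lpNorm p (a - b) ^ 2) (𝓝[>] 0)
      (𝓝 (R a - R b - β / 2 * (1 - 0) * lpNorm p (a - b) ^ 2)) :=
    (Continuous.tendsto (by fun_prop) 0).mono_left nhdsWithin_le_nhds
  have hderiv := le_of_tendsto_of_tendsto
    (hRb.hasFDerivAt.hasLineDerivAt (a - b)).tendsto_slope_zero_right hlim
    (eventually_of_mem (Ioo_mem_nhdsGT one_pos) hslope)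
  unfold bregman
  linarith

end StronglyConvexOnWrt

theorem omd_step_close_general {n : ℕ} (p : ℝ≥0∞)
    (hp : 1 ≤ p)
    (F : Set (Fin n → ℝ)) (hFconv : Convex ℝ F)
    (η : ℝ) (hη : 0 < η) (β : ℝ) (hβ : 0 < β)
    (R : (Fin n → ℝ) → ℝ) (hdiff : Differentiable ℝ R)
    (hR : StronglyConvexOnWrt F β p R)
    (x : Fin n → ℝ) (hx : x ∈ Set.Icc (0 : Fin n → ℝ) 1)
    (g g' : Fin n → ℝ) (hg : g ∈ F) (hg'mem : g' ∈ F)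
    (hg'min : ∀ u ∈ F, η * ip g' x + bregman R g' g ≤ η * ip u x + bregman R u g) :
    lpNorm p (g' - g) ≤ η * n / β := by
  set t := lpNorm p (g' - g)
  have hgrowth : omdObjective η R x g g' + β / 2 * t ^ 2 ≤ omdObjective η R x g g :=
    (hR.omdObjective hFconv η x g).add_sq_le_of_isMinOn hFconv hg'mem hg (isMinOn_iff.2 hg'min)
  have hbregman : β / 2 * t ^ 2 ≤ bregman R g' g := hR.sq_le_bregman hg'mem hg (hdiff g)
  have hpair : ip g x - ip g' x ≤ n * t := by
    have hx1 : ∀ i, |x i| ≤ 1 := fun i => (abs_of_nonneg (hx.1 i)).trans_le (hx.2 i)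
    have := abs_ip_le_card_mul_lpNorm (zero_lt_one.trans_le hp).ne' (g' - g) x hx1
    rw [ip_eq_dotProduct, sub_dotProduct] at this
    simp only [ip_eq_dotProduct]
    linarith [neg_abs_le (g' ⬝ᵥ x - g ⬝ᵥ x)]
  have hquad : β * t ^ 2 ≤ η * n * t := by
    simp only [omdObjective, bregman_self, add_zero] at hgrowth
    linarith [mul_le_mul_of_nonneg_left hpair hη.le]
  have ht : 0 ≤ t := lpNorm_nonneg p (g' - g)
  rw [le_div_iff₀ hβ]
  rcases ht.eq_or_lt with ht | ht
  · rw [← ht, zero_mul]; positivity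
  · exact le_of_mul_le_mul_right (by linarith) ht

/-- **One step of Online Mirror Descent moves by at most `η n / β`.**
If `g' ∈ F` minimizes `u ↦ η ⟨u, x⟩ + D_R(u, g)` over `F`, with `R` differentiable and
`β`-strongly convex w.r.t. `ℓ_p` on the convex set `F`, and `x ∈ [0,1]ⁿ`, then
`‖g' - g‖_p ≤ η n / β`. -/
theorem omd_step_close {n : ℕ} (p q : ℝ≥0∞)
    (hp : 1 ≤ p) (hq : 1 ≤ q) (hpq : 1 / p + 1 / q = 1)
    (F : Set (Fin n → ℝ)) (hFconv : Convex ℝ F)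
    (η : ℝ) (hη : 0 < η) (β : ℝ) (hβ : 0 < β)
    (R : (Fin n → ℝ) → ℝ) (hdiff : Differentiable ℝ R)
    (hR : StronglyConvexOnWrt F β p R)
    (x : Fin n → ℝ) (hx : x ∈ Set.Icc (0 : Fin n → ℝ) 1)
    (g g' : Fin n → ℝ) (hg : g ∈ F) (hg'mem : g' ∈ F)
    (hg'min : ∀ u ∈ F, η * ip g' x + bregman R g' g ≤ η * ip u x + bregman R u g) :
    lpNorm p (g' - g) ≤ η * n / β :=
  omd_step_close_general p hp F hFconv η hη β hβ R hdiff hR x hx g g' hg hg'mem hg'min
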